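/- With the FastMap iteration as defined (w¹ = w, pⱼ(v) = (d^j(aⱼ,v) + d^j(aⱼ,bⱼ) - d^j(v,bⱼ))/2, w^{j+1}(u,v) = w^j(u,v) - |pⱼ(u) - pⱼ(v)|), define the heuristic after i iterations as h^i(x,y) = Σ_{j=1}^{i} |pⱼ(x) - pⱼ(y)|. Then for all nodes x, y, g and all i: d¹(x,y) + h^i(y,g) - h^i(x,g) ≥ d^{i+1}(x,y). -/

import Mathlib

/-!
A single FastMap iteration lowers every edge weight `w(u,v)` by `|p(u) - p(v)|`. Since `p` is
1-Lipschitz for the current distance `d`, the new weights stay nonnegative, and along any walk from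
`x` to `y` the total decrease is at least `|p(x) - p(y)|`; hence `d^{j+1}(x,y) + |pⱼ(x) - pⱼ(y)|
≤ d^j(x,y)`. Telescoping gives `d^{i+1}(x,y) + h^i(x,y) ≤ d¹(x,y)`, and the triangle inequality for
the L1 distance `h^i` gives `h^i(x,g) - h^i(y,g) ≤ h^i(x,y)`.
-/

noncomputable def walkWeight {V : Type*} {G : SimpleGraph V} (w : V → V → ℝ)
    {x y : V} (p : G.Walk x y) : ℝ :=
  (p.darts.map (fun d => w d.toProd.1 d.toProd.2)).sum

noncomputable def spDist {V : Type*} (G : SimpleGraph V) (w : V → V → ℝ)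
    (x y : V) : ℝ :=
  sInf {c : ℝ | ∃ p : G.Walk x y, walkWeight w p = c}

/-- The paper's `pⱼ(v)`, for `d = d^j` and pivots `a = aⱼ`, `b = bⱼ`. -/
noncomputable def fastmapCoord {V : Type*} (d : V → V → ℝ) (a b v : V) : ℝ :=
  (d a v + d a b - d v b) / 2

section Walk

variable {V : Type*} {G : SimpleGraph V}

@[simp]
lemma walkWeight_nil (w : V → V → ℝ) (x : V) :
    walkWeight w (SimpleGraph.Walk.nil : G.Walk x x) = 0 :=
  rfl

@[simp]
lemma walkWeight_cons (w : V → V → ℝ) {x y z : V} (hadj : G.Adj x y) (q : G.Walk y z) :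
    walkWeight w (q.cons hadj) = w x y + walkWeight w q := by
  simp [walkWeight]

lemma walkWeight_append (w : V → V → ℝ) {x y z : V} (q₁ : G.Walk x y) (q₂ : G.Walk y z) :
    walkWeight w (q₁.append q₂) = walkWeight w q₁ + walkWeight w q₂ := by
  simp [walkWeight, SimpleGraph.Walk.darts_append]

lemma walkWeight_reverse {w : V → V → ℝ} (hs : ∀ u v, w u v = w v u) {x y : V}
    (q : G.Walk x y) : walkWeight w q.reverse = walkWeight w q := by
  simp only [walkWeight, SimpleGraph.Walk.darts_reverse, List.map_reverse, List.sum_reverse,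
    List.map_map]
  congr 1
  ext d
  simp [SimpleGraph.Dart.symm, hs]

lemma walkWeight_nonneg {w : V → V → ℝ} (hn : ∀ u v, G.Adj u v → 0 ≤ w u v)
    {x y : V} (q : G.Walk x y) : 0 ≤ walkWeight w q := by
  induction q with
  | nil => simp
  | cons hadj q ih => rw [walkWeight_cons]; exact add_nonneg (hn _ _ hadj) ih

lemma walkWeight_eq_sub {w w' c : V → V → ℝ} (hw' : ∀ u v, G.Adj u v → w' u v = w u v - c u v)
    {x y : V} (q : G.Walk x y) : walkWeight w' q = walkWeight w q - walkWeight c q := by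
  induction q with
  | nil => simp
  | cons hadj q ih => simp only [walkWeight_cons, ih, hw' _ _ hadj]; ring

lemma abs_sub_le_walkWeight (f : V → ℝ) {x y : V} (q : G.Walk x y) :
    |f x - f y| ≤ walkWeight (fun u v => |f u - f v|) q := by
  induction q with
  | nil => simp
  | @cons x z y hadj q ih =>
    rw [walkWeight_cons]
    exact (abs_sub_le _ (f z) _).trans (by gcongr)

end Walk

section Distance

variable {V : Type*} {G : SimpleGraph V} {w : V → V → ℝ}

lemma spDist_le_walkWeight (hn : ∀ u v, G.Adj u v → 0 ≤ w u v) {x y : V} (q : G.Walk x y) :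
    spDist G w x y ≤ walkWeight w q :=
  csInf_le ⟨0, by rintro c ⟨q', rfl⟩; exact walkWeight_nonneg hn q'⟩ ⟨q, rfl⟩

lemma le_spDist {x y : V} (hxy : G.Reachable x y) {c : ℝ}
    (hc : ∀ q : G.Walk x y, c ≤ walkWeight w q) : c ≤ spDist G w x y := by
  obtain ⟨q₀⟩ := hxy
  exact le_csInf ⟨walkWeight w q₀, q₀, rfl⟩ (by rintro d ⟨q, rfl⟩; exact hc q)

lemma spDist_le_of_adj (hn : ∀ u v, G.Adj u v → 0 ≤ w u v) {u v : V} (hadj : G.Adj u v) :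
    spDist G w u v ≤ w u v := by
  simpa using spDist_le_walkWeight hn (SimpleGraph.Walk.cons hadj SimpleGraph.Walk.nil)

lemma spDist_comm (hG : G.Preconnected) (hs : ∀ u v, w u v = w v u)
    (hn : ∀ u v, G.Adj u v → 0 ≤ w u v) (x y : V) :
    spDist G w x y = spDist G w y x := by
  have key : ∀ a b : V, spDist G w a b ≤ spDist G w b a := fun a b =>
    le_spDist (hG b a) fun q => (walkWeight_reverse hs q).symm ▸ spDist_le_walkWeight hn q.reverse
  exact le_antisymm (key x y) (key y x)

lemma spDist_triangle (hG : G.Preconnected) (hn : ∀ u v, G.Adj u v → 0 ≤ w u v) (a b c : V) :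
    spDist G w a c ≤ spDist G w a b + spDist G w b c := by
  have hab : ∀ q₂ : G.Walk b c, spDist G w a c - walkWeight w q₂ ≤ spDist G w a b :=
    fun q₂ => le_spDist (hG a b) fun q₁ => by
      have := spDist_le_walkWeight hn (q₁.append q₂)
      rw [walkWeight_append] at this
      linarith
  have hbc : spDist G w a c - spDist G w a b ≤ spDist G w b c :=
    le_spDist (hG b c) fun q₂ => by linarith [hab q₂]
  linarith

end Distance

lemma abs_fastmapCoord_sub_le {V : Type*} {d : V → V → ℝ}
    (htri : ∀ x y z, d x z ≤ d x y + d y z) (hcomm : ∀ x y, d x y = d y x) (a b u v : V) :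
    |fastmapCoord d a b u - fastmapCoord d a b v| ≤ d u v := by
  unfold fastmapCoord
  rw [abs_le]
  constructor <;> linarith [htri a u v, htri a v u, htri u v b, htri v u b, hcomm u v]

section Step

variable {V : Type*} {G : SimpleGraph V} {w w' : V → V → ℝ} {f : V → ℝ}

lemma fastmapStep_nonneg (hG : G.Preconnected) (hs : ∀ u v, w u v = w v u)
    (hn : ∀ u v, G.Adj u v → 0 ≤ w u v) {a b : V}
    (hf : ∀ v, f v = fastmapCoord (spDist G w) a b v)
    (hw' : ∀ u v, G.Adj u v → w' u v = w u v - |f u - f v|) :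
    ∀ u v, G.Adj u v → 0 ≤ w' u v := by
  intro u v hadj
  have hlip : |f u - f v| ≤ spDist G w u v := by
    rw [hf, hf]
    exact abs_fastmapCoord_sub_le (spDist_triangle hG hn) (spDist_comm hG hs hn) a b u v
  rw [hw' u v hadj]
  linarith [spDist_le_of_adj hn hadj]

lemma spDist_fastmapStep_add_le {x y : V} (hxy : G.Reachable x y)
    (hn' : ∀ u v, G.Adj u v → 0 ≤ w' u v)
    (hw' : ∀ u v, G.Adj u v → w' u v = w u v - |f u - f v|) :
    spDist G w' x y + |f x - f y| ≤ spDist G w x y :=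
  le_spDist hxy fun q => by
    linarith [spDist_le_walkWeight hn' q, walkWeight_eq_sub hw' q, abs_sub_le_walkWeight f q]

end Step

lemma sum_abs_sub_le {ι : Type*} (s : Finset ι) (a b c : ι → ℝ) :
    ∑ j ∈ s, |a j - c j| ≤ ∑ j ∈ s, |a j - b j| + ∑ j ∈ s, |b j - c j| := by
  rw [← Finset.sum_add_distrib]
  exact Finset.sum_le_sum fun j _ => abs_sub_le _ _ _

/- Iterations are 0-indexed: `W i`, `p i`, `A i`, `B i` are the paper's `w^{i+1}`, `p_{i+1}`,
`a_{i+1}`, `b_{i+1}`, so `spDist G (W i)` is `d^{i+1}`. -/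
open Finset in
theorem fastmap_lemma3_general {V : Type*} (G : SimpleGraph V) (hconn : G.Connected) (w : V → V → ℝ)
    (hnonneg : ∀ u v, G.Adj u v → 0 ≤ w u v)
    (W : ℕ → V → V → ℝ) (hW0 : W 0 = w)
    (A B : ℕ → V) (p : ℕ → V → ℝ)
    (hp : ∀ i v, p i v = (spDist G (W i) (A i) v + spDist G (W i) (A i) (B i)
        - spDist G (W i) v (B i)) / 2)
    (hWsymm : ∀ i u v, W i u v = W i v u)
    (hWsucc : ∀ i u v, G.Adj u v → W (i + 1) u v = W i u v - |p i u - p i v|)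
    (h : ℕ → V → V → ℝ)
    (hh : ∀ i x y, h i x y = ∑ j ∈ Finset.range i, |p j x - p j y|) :
    ∀ i (x y g : V),
      spDist G (W i) x y ≤ spDist G (W 0) x y + h i y g - h i x g := by
  intro i x y g
  have hWnn : ∀ i u v, G.Adj u v → 0 ≤ W i u v := by
    intro i
    induction i with
    | zero => rwa [hW0]
    | succ i ih => exact fastmapStep_nonneg hconn.preconnected (hWsymm i) ih (hp i) (hWsucc i)
  have hdecrease :
      ∀ i, spDist G (W i) x y + ∑ j ∈ range i, |p j x - p j y| ≤ spDist G (W 0) x y := by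
    intro i
    induction i with
    | zero => simp
    | succ i ih =>
      rw [sum_range_succ]
      linarith [spDist_fastmapStep_add_le (hconn.preconnected x y) (hWnn (i + 1)) (hWsucc i)]
  rw [hh, hh]
  linarith [hdecrease i, sum_abs_sub_le (range i) (p · x) (p · y) (p · g)]

open Finset in
/-- Lemma 3 of the FastMap paper: with heuristic
`h^i(x,y) = ∑_{j<i} |pⱼ(x) - pⱼ(y)|`, for all nodes `x y g` and all `i`,
`d¹(x,y) + h^i(y,g) - h^i(x,g) ≥ d^{i+1}(x,y)`. -/
theorem fastmap_lemma3 {V : Type*} [Fintype V] (G : SimpleGraph V) (hconn : G.Connected) (w : V → V → ℝ)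
    (hsymm : ∀ u v, w u v = w v u)
    (hnonneg : ∀ u v, G.Adj u v → 0 ≤ w u v)
    (W : ℕ → V → V → ℝ) (hW0 : W 0 = w)
    (A B : ℕ → V) (p : ℕ → V → ℝ)
    (hp : ∀ i v, p i v = (spDist G (W i) (A i) v + spDist G (W i) (A i) (B i)
        - spDist G (W i) v (B i)) / 2)
    (hWsymm : ∀ i u v, W i u v = W i v u)
    (hWsucc : ∀ i u v, G.Adj u v → W (i + 1) u v = W i u v - |p i u - p i v|)
    (h : ℕ → V → V → ℝ)
    (hh : ∀ i x y, h i x y = ∑ j ∈ Finset.range i, |p j x - p j y|) :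
    ∀ i (x y g : V),
      spDist G (W i) x y ≤ spDist G (W 0) x y + h i y g - h i x g :=
  fastmap_lemma3_general G hconn w hnonneg W hW0 A B p hp hWsymm hWsucc h hh
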